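/- arXiv:1511.09470 — 2 statements merged into one kernel-verified Lean document; each statement's English description precedes it below -/
import Mathlib

section
/- Let g : ℝ → ℂ be a continuous function in the Wiener space whose Fourier transform satisfies ĝ = −g (i.e., g is an eigenfunction of the Fourier transform with eigenvalue −1; such g is automatically even). Then ∑_{k∈ℤ} (−1)^k g(√2·(k + 1/4)) = 0. -/
open MeasureTheory Complex Real FourierTransform

/-- The Zak transform `Z_λ f (x, γ) = √λ ∑_{k∈ℤ} f(λ(x+k)) e^{-2πikγ}`. -/
noncomputable def zak (lam : ℝ) (f : ℝ → ℂ) (x γ : ℝ) : ℂ :=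
  (Real.sqrt lam : ℂ) *
    ∑' k : ℤ, f (lam * (x + k)) * Complex.exp (-2 * Real.pi * Complex.I * k * γ)

/-- Membership in the Wiener space `W(ℝ)`:
`∑_{k∈ℤ} sup_{x∈[0,1]} |f(x+k)| < ∞`. -/
def InWiener (f : ℝ → ℂ) : Prop :=
  Summable (fun k : ℤ => ⨆ x : Set.Icc (0:ℝ) 1, ‖f ((x : ℝ) + k)‖)

/-!
Apply Poisson summation to `h(t) = e^{-πit} g(√2 t + √2/4)`, whose integer samples are the terms
of the sum `S` in question. Since `ĝ = -g`, `ĥ(ξ) = -2^{-1/2} e^{πi(ξ+1/2)/2} g((ξ + 1/2)/√2)`;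
at `ξ = 2k` this is `-2^{-1/2} e^{πi/4}` times the `k`-th term of `S`, and at `ξ = 2k + 1`, since
`g` is even, it is `2^{-1/2} e^{3πi/4}` times the `(-k-1)`-th term. As
`e^{πi/4} - e^{3πi/4} = √2`, Poisson summation reads `S = -S`.

The Wiener condition gives the summability that Poisson summation needs and, through
integrability and Fourier inversion, the evenness of `g`.
-/

section EvenOdd

variable {M : Type*} [AddCommMonoid M] [TopologicalSpace M] [ContinuousAdd M] {f : ℤ → M}
  {a b : M}

theorem HasSum.int_even_add_odd (he : HasSum (fun k ↦ f (2 * k)) a)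
    (ho : HasSum (fun k ↦ f (2 * k + 1)) b) : HasSum f (a + b) := by
  have := mul_right_injective₀ (two_ne_zero' ℤ)
  replace ho := ((add_left_injective 1).comp this).hasSum_range_iff.2 ho
  refine (this.hasSum_range_iff.2 he).add_isCompl ?_ ho
  simpa [Function.comp_def] using Int.isCompl_even_odd

theorem Summable.int_even_add_odd (he : Summable fun k ↦ f (2 * k))
    (ho : Summable fun k ↦ f (2 * k + 1)) : Summable f :=
  (he.hasSum.int_even_add_odd ho.hasSum).summable

theorem tsum_int_even_add_odd [T2Space M] (he : Summable fun k ↦ f (2 * k))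
    (ho : Summable fun k ↦ f (2 * k + 1)) :
    ∑' k, f (2 * k) + ∑' k, f (2 * k + 1) = ∑' k, f k :=
  (he.hasSum.int_even_add_odd ho.hasSum).tsum_eq.symm

end EvenOdd

theorem neg_one_zpow_neg_sub_one {α : Type*} [DivisionRing α] (k : ℤ) :
    (-1 : α) ^ (-k - 1) = -(-1) ^ k := by
  rcases Int.even_or_odd k with h | h
  · rw [h.neg_one_zpow, Odd.neg_one_zpow (by simpa [Int.odd_sub, parity_simps] using h)]
  · rw [h.neg_one_zpow, Even.neg_one_zpow (by simpa [Int.even_sub, parity_simps] using h), neg_neg]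

theorem strictMono_floor_mul {α : ℝ} (hα : 1 ≤ α) : StrictMono fun n : ℤ ↦ ⌊α * n⌋ := by
  refine strictMono_int_of_lt_succ fun n ↦ Int.add_one_le_iff.1 ?_
  rw [← Int.floor_add_one]
  exact Int.floor_le_floor (by push_cast; nlinarith)

namespace Real

variable {E : Type*} [NormedAddCommGroup E] [NormedSpace ℂ E]

theorem fourier_comp_mul_add (f : ℝ → E) {a : ℝ} (ha : a ≠ 0) (b ξ : ℝ) :
    𝓕 (fun t ↦ f (a * t + b)) ξ = |a|⁻¹ • 𝐞 (b * ξ / a) • 𝓕 f (ξ / a) := by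
  set G : ℝ → E := fun u ↦ 𝐞 (-((u - b) / a * ξ)) • f u
  calc 𝓕 (fun t ↦ f (a * t + b)) ξ = ∫ t, G (a * t + b) := by
        rw [fourier_real_eq]
        congr 1 with t
        simp only [G, add_sub_cancel_right, mul_div_cancel_left₀ _ ha]
    _ = |a⁻¹| • ∫ u, G (u + b) := Measure.integral_comp_mul_left (fun v ↦ G (v + b)) a
    _ = |a|⁻¹ • ∫ u, G u := by rw [integral_add_right_eq_self, abs_inv]
    _ = |a|⁻¹ • 𝐞 (b * ξ / a) • 𝓕 f (ξ / a) := by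
        congr 1
        rw [fourier_real_eq, Circle.smul_def, ← integral_smul]
        refine integral_congr_ae (Filter.Eventually.of_forall fun u ↦ ?_)
        simp only [G, Circle.smul_def, smul_smul, ← Circle.coe_mul, ← AddChar.map_add_eq_mul]
        congr 3
        field_simp
        ring

theorem fourier_fourierChar_smul (f : ℝ → E) (c ξ : ℝ) :
    𝓕 (fun t ↦ 𝐞 (-(c * t)) • f t) ξ = 𝓕 f (ξ + c) := by
  simp only [fourier_real_eq, smul_smul, ← AddChar.map_add_eq_mul]
  congr 1 with t
  congr 2
  ring

theorem fourierChar_intCast_div_two (k : ℤ) : (𝐞 (k / 2) : ℂ) = (-1) ^ k := by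
  rw [fourierChar_apply, ← exp_pi_mul_I, ← exp_int_mul]
  congr 1
  push_cast
  ring

theorem fourierChar_one_eighth_sub_three_eighths : (𝐞 (1 / 8) : ℂ) - 𝐞 (3 / 8) = √2 := by
  rw [fourierChar_apply, fourierChar_apply, exp_mul_I, exp_mul_I, ← ofReal_cos, ← ofReal_sin,
    ← ofReal_cos, ← ofReal_sin, show 2 * π * (3 / 8) = π - π / 4 by ring,
    show 2 * π * (1 / 8) = π / 4 by ring, Real.cos_pi_sub, Real.sin_pi_sub, Real.cos_pi_div_four,
    Real.sin_pi_div_four]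
  push_cast
  ring

theorem even_of_fourier_eq_neg {f : ℝ → ℂ} (hc : Continuous f) (hi : Integrable f)
    (hf : 𝓕 f = -f) : Function.Even f := by
  intro x
  have hinv := hc.fourierInv_fourier_eq hi (by rw [hf]; exact hi.neg)
  have hneg : 𝓕 (-f) = -𝓕 f := by
    ext ξ
    simp [fourier_real_eq, integral_neg]
  rw [← congrFun hinv x, fourierInv_eq_fourier_neg, hf, hneg, hf]
  simp

end Real

noncomputable def wienerSup (g : ℝ → ℂ) (k : ℤ) : ℝ := ⨆ x : Set.Icc (0:ℝ) 1, ‖g (x + k)‖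

section Wiener

variable {g : ℝ → ℂ}

theorem wienerSup_nonneg (k : ℤ) : 0 ≤ wienerSup g k :=
  Real.iSup_nonneg fun _ ↦ norm_nonneg _

theorem norm_le_wienerSup (hg : Continuous g) {t : ℝ} {k : ℤ} (h₀ : k ≤ t) (h₁ : t ≤ k + 1) :
    ‖g t‖ ≤ wienerSup g k := by
  have hbdd : BddAbove (Set.range fun x : Set.Icc (0:ℝ) 1 ↦ ‖g (x + k)‖) :=
    (isCompact_range (by fun_prop)).bddAbove
  have hmem : t - k ∈ Set.Icc (0:ℝ) 1 := ⟨by linarith, by linarith⟩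
  simpa [wienerSup] using le_ciSup hbdd ⟨t - k, hmem⟩

theorem norm_le_sum_wienerSup (hg : Continuous g) {a t : ℝ} {D : ℕ} (h : |t - a| ≤ D) :
    ‖g t‖ ≤ ∑ j ∈ Finset.Icc (-D : ℤ) D, wienerSup g (⌊a⌋ + j) := by
  rw [abs_le] at h
  have hlo : ⌊a⌋ - D ≤ ⌊t⌋ := by
    rw [← Int.floor_sub_natCast]; exact Int.floor_le_floor (by linarith)
  have hhi : ⌊t⌋ ≤ ⌊a⌋ + D := by
    rw [← Int.floor_add_natCast]; exact Int.floor_le_floor (by linarith)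
  calc ‖g t‖ ≤ wienerSup g ⌊t⌋ :=
        norm_le_wienerSup hg (Int.floor_le t) (Int.lt_floor_add_one t).le
    _ = wienerSup g (⌊a⌋ + (⌊t⌋ - ⌊a⌋)) := by rw [add_sub_cancel]
    _ ≤ _ := Finset.single_le_sum (f := fun j ↦ wienerSup g (⌊a⌋ + j))
        (fun _ _ ↦ wienerSup_nonneg _) (Finset.mem_Icc.2 ⟨by omega, by omega⟩)

namespace InWiener

variable (hg : Continuous g) (hW : InWiener g)
include hW

theorem summable_sum_wienerSup_floor_mul {α : ℝ} (hα : 1 ≤ α) (D : ℕ) :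
    Summable fun n : ℤ ↦ ∑ j ∈ Finset.Icc (-D : ℤ) D, wienerSup g (⌊α * n⌋ + j) :=
  summable_sum fun j _ ↦
    ((Equiv.addRight j).summable_iff.2 hW).comp_injective (strictMono_floor_mul hα).injective

include hg

theorem integrable : Integrable g := by
  refine Real.integrable_of_summable_norm_Icc (f := ⟨g, hg⟩)
    (hW.of_nonneg_of_le (fun _ ↦ norm_nonneg _) fun n ↦ ?_)
  refine (ContinuousMap.norm_le _ (wienerSup_nonneg n)).2 fun x ↦ ?_
  exact norm_le_wienerSup hg (by simpa using x.2.1)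
    (by simpa [add_comm] using add_le_add_right x.2.2 (n : ℝ))

theorem summable_norm_comp_mul_add {α : ℝ} (hα : 1 ≤ α) (β : ℝ) :
    Summable fun n : ℤ ↦ ‖g (α * n + β)‖ := by
  refine (hW.summable_sum_wienerSup_floor_mul hα ⌈|β|⌉₊).of_nonneg_of_le
    (fun _ ↦ norm_nonneg _) fun n ↦ norm_le_sum_wienerSup hg ?_
  simpa using Nat.le_ceil |β|

theorem summable_norm_restrict_comp_addRight {α : ℝ} (hα : 1 ≤ α) (β : ℝ) {φ : C(ℝ, ℂ)}
    (hφ : ∀ t, ‖φ t‖ ≤ ‖g (α * t + β)‖) (K : TopologicalSpace.Compacts ℝ) :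
    Summable fun n : ℤ ↦ ‖(φ.comp (ContinuousMap.addRight n)).restrict K‖ := by
  obtain ⟨R, -, hR⟩ := K.isCompact.isBounded.subset_closedBall_lt 0 0
  refine (hW.summable_sum_wienerSup_floor_mul hα ⌈α * R + |β|⌉₊).of_nonneg_of_le
    (fun _ ↦ norm_nonneg _) fun n ↦
      (ContinuousMap.norm_le _ (Finset.sum_nonneg fun _ _ ↦ wienerSup_nonneg _)).2
        fun x ↦ (hφ _).trans (norm_le_sum_wienerSup hg ?_)
  have hx : |(x : ℝ)| ≤ R := by simpa using hR x.2
  calc |α * (x + n) + β - α * n| = |α * x + β| := by ring_nf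
    _ ≤ |α * x| + |β| := abs_add_le _ _
    _ ≤ α * R + |β| := by rw [abs_mul, abs_of_pos (by linarith)]; gcongr
    _ ≤ ⌈α * R + |β|⌉₊ := Nat.le_ceil _

end InWiener

end Wiener

noncomputable def alternatingSample (g : ℝ → ℂ) (k : ℤ) : ℂ := (-1) ^ k * g (√2 * (k + 1 / 4))

noncomputable def twistedDilate (g : ℝ → ℂ) (t : ℝ) : ℂ :=
  𝐞 (-(1 / 2 * t)) • g (√2 * t + √2 / 4)

section TwistedDilate

variable {g : ℝ → ℂ}

theorem continuous_twistedDilate (hg : Continuous g) : Continuous (twistedDilate g) := by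
  unfold twistedDilate; fun_prop

theorem norm_twistedDilate (t : ℝ) : ‖twistedDilate g t‖ = ‖g (√2 * t + √2 / 4)‖ := by
  rw [twistedDilate, Circle.norm_smul]

theorem twistedDilate_intCast (n : ℤ) : twistedDilate g n = alternatingSample g n := by
  have : -(1 / 2 * (n : ℝ)) = (-n : ℤ) / 2 := by push_cast; ring
  rw [twistedDilate, Circle.smul_def, this, fourierChar_intCast_div_two, zpow_neg,
    ← inv_zpow, inv_neg_one, smul_eq_mul, alternatingSample]
  congr 2; ring

theorem fourier_twistedDilate (heig : 𝓕 g = -g) (ξ : ℝ) :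
    𝓕 (twistedDilate g) ξ = -((√2 : ℂ)⁻¹ * 𝐞 ((ξ + 1 / 2) / 4) * g ((ξ + 1 / 2) / √2)) := by
  have hs : √2 ≠ 0 := by positivity
  rw [show twistedDilate g = fun t ↦ 𝐞 (-(1 / 2 * t)) • (fun u ↦ g (√2 * u + √2 / 4)) t from rfl,
    fourier_fourierChar_smul, fourier_comp_mul_add _ hs, heig,
    abs_of_pos (by positivity), Circle.smul_def,
    show √2 / 4 * (ξ + 1 / 2) / √2 = (ξ + 1 / 2) / 4 by field_simp]
  simp only [Pi.neg_apply, Complex.real_smul, smul_eq_mul, ofReal_inv, mul_neg, mul_assoc]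

theorem fourier_twistedDilate_two_mul (heig : 𝓕 g = -g) (k : ℤ) :
    𝓕 (twistedDilate g) ((2 * k : ℤ) : ℝ) = -((√2 : ℂ)⁻¹ * 𝐞 (1 / 8)) * alternatingSample g k := by
  have hchar : (𝐞 ((((2 * k : ℤ) : ℝ) + 1 / 2) / 4) : ℂ) = (-1) ^ k * 𝐞 (1 / 8) := by
    rw [show (((2 * k : ℤ) : ℝ) + 1 / 2) / 4 = k / 2 + 1 / 8 by push_cast; ring,
      AddChar.map_add_eq_mul, Circle.coe_mul, fourierChar_intCast_div_two]
  have harg : (((2 * k : ℤ) : ℝ) + 1 / 2) / √2 = √2 * (k + 1 / 4) := by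
    rw [div_eq_iff (by positivity)]
    push_cast
    linear_combination (-(k : ℝ) - 1 / 4) * Real.mul_self_sqrt zero_le_two
  rw [fourier_twistedDilate heig, hchar, harg, alternatingSample]
  ring

theorem fourier_twistedDilate_two_mul_add_one (heig : 𝓕 g = -g) (heven : Function.Even g)
    (k : ℤ) : 𝓕 (twistedDilate g) ((2 * k + 1 : ℤ) : ℝ) =
      (√2 : ℂ)⁻¹ * 𝐞 (3 / 8) * alternatingSample g (-k - 1) := by
  have hchar : (𝐞 ((((2 * k + 1 : ℤ) : ℝ) + 1 / 2) / 4) : ℂ) = (-1) ^ k * 𝐞 (3 / 8) := by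
    rw [show (((2 * k + 1 : ℤ) : ℝ) + 1 / 2) / 4 = k / 2 + 3 / 8 by push_cast; ring,
      AddChar.map_add_eq_mul, Circle.coe_mul, fourierChar_intCast_div_two]
  have harg : (((2 * k + 1 : ℤ) : ℝ) + 1 / 2) / √2 = -(√2 * (((-k - 1 : ℤ) : ℝ) + 1 / 4)) := by
    rw [div_eq_iff (by positivity)]
    push_cast
    linear_combination (-(k : ℝ) - 3 / 4) * Real.mul_self_sqrt zero_le_two
  rw [fourier_twistedDilate heig, hchar, harg, heven, alternatingSample, neg_one_zpow_neg_sub_one]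
  ring

variable (hg : Continuous g) (hW : InWiener g)
include hg hW

theorem summable_alternatingSample : Summable (alternatingSample g) := by
  refine .of_norm ((hW.summable_norm_comp_mul_add hg one_lt_sqrt_two.le (√2 / 4)).congr fun k ↦ ?_)
  rw [alternatingSample, norm_mul, norm_zpow, norm_neg, norm_one, one_zpow, one_mul]
  ring_nf

variable (heig : 𝓕 g = -g)
include heig

theorem summable_fourier_twistedDilate_two_mul :
    Summable fun k : ℤ ↦ 𝓕 (twistedDilate g) ((2 * k : ℤ) : ℝ) := by
  simp only [fourier_twistedDilate_two_mul heig]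
  exact (summable_alternatingSample hg hW).mul_left _

theorem summable_fourier_twistedDilate_two_mul_add_one :
    Summable fun k : ℤ ↦ 𝓕 (twistedDilate g) ((2 * k + 1 : ℤ) : ℝ) := by
  simp only [fourier_twistedDilate_two_mul_add_one heig
    (Real.even_of_fourier_eq_neg hg (hW.integrable hg) heig)]
  exact (((Equiv.neg ℤ).trans (Equiv.subRight 1)).summable_iff.2
    (summable_alternatingSample hg hW)).mul_left _

theorem summable_fourier_twistedDilate : Summable fun n : ℤ ↦ 𝓕 (twistedDilate g) n :=
  .int_even_add_odd (summable_fourier_twistedDilate_two_mul hg hW heig)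
    (summable_fourier_twistedDilate_two_mul_add_one hg hW heig)

theorem tsum_fourier_twistedDilate :
    ∑' n : ℤ, 𝓕 (twistedDilate g) n = -∑' k, alternatingSample g k := by
  have heven := Real.even_of_fourier_eq_neg hg (hW.integrable hg) heig
  have hodd : ∑' k, alternatingSample g (-k - 1) = ∑' k, alternatingSample g k :=
    ((Equiv.neg ℤ).trans (Equiv.subRight 1)).tsum_eq _
  have hs : (√2 : ℂ) ≠ 0 := by exact_mod_cast (Real.sqrt_pos.2 two_pos).ne'
  rw [← tsum_int_even_add_odd (f := fun n : ℤ ↦ 𝓕 (twistedDilate g) n)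
    (summable_fourier_twistedDilate_two_mul hg hW heig)
    (summable_fourier_twistedDilate_two_mul_add_one hg hW heig)]
  simp only [fourier_twistedDilate_two_mul heig, fourier_twistedDilate_two_mul_add_one heig heven,
    tsum_mul_left, hodd]
  linear_combination (-(√2 : ℂ)⁻¹ * ∑' k, alternatingSample g k) *
    fourierChar_one_eighth_sub_three_eighths - (∑' k, alternatingSample g k) * mul_inv_cancel₀ hs

end TwistedDilate

theorem sum_eigen_neg_one_quarter (g : ℝ → ℂ) (hg : Continuous g) (hW : InWiener g)
    (heig : ∀ γ : ℝ, 𝓕 g γ = -g γ) :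
    ∑' k : ℤ, (-1 : ℂ) ^ k * g (Real.sqrt 2 * ((k : ℝ) + 1/4)) = 0 := by
  have heig' : 𝓕 g = -g := funext heig
  have hpoisson := Real.tsum_eq_tsum_fourier (f := ⟨twistedDilate g, continuous_twistedDilate hg⟩)
    (hW.summable_norm_restrict_comp_addRight hg one_lt_sqrt_two.le _
      fun t ↦ (norm_twistedDilate t).le)
    (summable_fourier_twistedDilate hg hW heig') 0
  simp only [ContinuousMap.coe_mk, zero_add, twistedDilate_intCast, AddCircle.coe_zero,
    fourier_eval_zero, mul_one, tsum_fourier_twistedDilate hg hW heig'] at hpoisson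
  change ∑' k, alternatingSample g k = 0
  linear_combination hpoisson / 2
end

section
/- For every m ∈ ℕ ∪ {0} and p ∈ {1,5}, the Hermite function h_{4m+2} satisfies ∑_{k∈ℤ} (−1)^k h_{4m+2}(√3·(k + p/6)) = 0. -/
open MeasureTheory Complex Real FourierTransform

/-- The `n`-th Hermite function `h_n(x) = c_n^{-1/2} e^{π x²} (d/dx)^n e^{-2π x²}`
with `c_n = (2π)^n 2^{n-1/2} n!`. -/
noncomputable def hermiteFun (n : ℕ) (x : ℝ) : ℝ :=
  ((2 * Real.pi) ^ n * (2:ℝ) ^ ((n : ℝ) - 1/2) * (n.factorial : ℝ)) ^ (-(1/2 : ℝ)) *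
    Real.exp (Real.pi * x ^ 2) * iteratedDeriv n (fun t => Real.exp (-2 * Real.pi * t ^ 2)) x

/-!
The function `h = h_{4m+2}` is even and satisfies `𝓕 h = -h`. Poisson summation for the modulated
dilate `t ↦ e^{iπt} h(√3 t)` expresses `S(r) = ∑_k (-1)^k h(√3 (k + r))` at `r = 1/6` through the
values of `h` at the odd multiples of `√3/6`. Sorting these by residue mod `6` gives back
`S(-1/6)`, `S(1/6)` and `S(1/2)` with weights `1`, `e^{iπ/3}`, `e^{2iπ/3}`; evenness gives
`S(-1/6) = S(1/6)` and `S(1/2) = 0`, and `1 + e^{iπ/3} = √3 e^{iπ/6}` turns the identity into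
`S(1/6) = -S(1/6)`. Finally `S(5/6) = -S(-1/6) = -S(1/6)`.
-/

open Filter Asymptotics Polynomial

namespace Real

variable {E : Type*} [NormedAddCommGroup E] [NormedSpace ℂ E]

lemma fourier_const_smul (c : ℂ) (f : ℝ → E) : 𝓕 (c • f) = c • 𝓕 f :=
  VectorFourier.fourierIntegral_const_smul _ _ _ _ _

lemma fourier_sub {f g : ℝ → E} (hf : Integrable f) (hg : Integrable g) :
    𝓕 (f - g) = 𝓕 f - 𝓕 g := by
  ext w
  simp only [fourier_eq, Pi.sub_apply, smul_sub]
  exact integral_sub ((fourierIntegral_convergent_iff w).2 hf)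
    ((fourierIntegral_convergent_iff w).2 hg)

lemma fourier_comp_mul_left_apply (f : ℝ → E) {a : ℝ} (ha : a ≠ 0) (ξ : ℝ) :
    𝓕 (fun t => f (a * t)) ξ = |a|⁻¹ • 𝓕 f (ξ / a) := by
  simp only [fourier_real_eq_integral_exp_smul]
  rw [← abs_inv, ← Measure.integral_comp_mul_left]
  congr 1 with t
  rw [show -2 * π * (a * t) * (ξ / a) = -2 * π * t * ξ by field_simp]

lemma fourier_exp_smul_apply (g : ℝ → E) (ν ξ : ℝ) :
    𝓕 (fun t : ℝ => cexp (2 * π * I * ν * t) • g t) ξ = 𝓕 g (ξ - ν) := by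
  simp only [fourier_real_eq_integral_exp_smul, smul_smul, ← Complex.exp_add]
  congr 1 with t
  congr 2
  push_cast
  ring

lemma fourier_deriv_sub_mul_smul {g : ℝ → E} (hg : Integrable g) (hdiff : Differentiable ℝ g)
    (hg' : Integrable (deriv g)) (hxg : Integrable (fun x : ℝ => x • g x)) :
    𝓕 (fun x : ℝ => deriv g x - (2 * π * x : ℂ) • g x) =
      fun ξ : ℝ => -I • (deriv (𝓕 g) ξ - (2 * π * ξ : ℂ) • 𝓕 g ξ) := by
  set h := fun x : ℝ => (-2 * π * I * x) • g x
  have hsplit : (fun x : ℝ => deriv g x - (2 * π * x : ℂ) • g x) = deriv g - I • h := by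
    ext x
    simp only [h, Pi.sub_apply, Pi.smul_apply, smul_smul]
    congr 2
    ring_nf
    simp
  have hh : Integrable h := by
    convert hxg.smul (-2 * π * I : ℂ) using 1
    ext x
    simp only [h, Pi.smul_apply, mul_smul, Complex.coe_smul]
  rw [hsplit, fourier_sub hg' (hh.smul I), fourier_const_smul, fourier_deriv hg hdiff hg',
    deriv_fourier hg hxg]
  ext ξ
  simp only [Pi.sub_apply, Pi.smul_apply, smul_sub, smul_smul]
  change _ = -I • 𝓕 h ξ - _
  rw [show (-I * (2 * π * ξ : ℂ)) = -(2 * π * I * ξ) by ring, neg_smul, neg_smul]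
  abel

lemma tsum_exp_mul_eq_tsum_fourier_sub {g : ℝ → ℂ} (hc : Continuous g) {s : ℝ}
    (hs : 1 < s) (hg : g =O[cocompact ℝ] (|·| ^ (-s))) (ν : ℝ)
    (hF : Summable fun n : ℤ => 𝓕 g (n - ν)) (x : ℝ) :
    ∑' n : ℤ, cexp (2 * π * I * ν * (x + n)) * g (x + n) =
      ∑' n : ℤ, 𝓕 g (n - ν) * fourier n (x : UnitAddCircle) := by
  have hmod : (fun t : ℝ => cexp (2 * π * I * ν * t) * g t) =O[cocompact ℝ] (|·| ^ (-s)) := by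
    refine (isBigO_of_le _ fun t => ?_).trans hg
    simp [Complex.norm_exp]
  have hF' (ξ : ℝ) : 𝓕 (fun t : ℝ => cexp (2 * π * I * ν * t) * g t) ξ = 𝓕 g (ξ - ν) :=
    fourier_exp_smul_apply g ν ξ
  have h := tsum_eq_tsum_fourier_of_rpow_decay_of_summable (by fun_prop) hs hmod
    (by simpa only [hF'] using hF) x
  simpa only [hF', ofReal_add, ofReal_intCast] using h

end Real

section Decay

variable {E : Type*} [NormedAddCommGroup E] {f : ℝ → E} {s : ℝ}

lemma isBigO_comp_mul_left_rpow (hf : f =O[cocompact ℝ] (|·| ^ (-s))) {a : ℝ} (ha : a ≠ 0) :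
    (fun t => f (a * t)) =O[cocompact ℝ] (|·| ^ (-s)) := by
  refine (hf.comp_tendsto (tendsto_cocompact_mul_left₀ ha)).trans ?_
  simp only [Function.comp_def, abs_mul, mul_rpow (abs_nonneg a) (abs_nonneg _)]
  exact (isBigO_refl _ _).const_mul_left _

lemma summable_int_comp_mul_add [CompleteSpace E] (hf : f =O[cocompact ℝ] (|·| ^ (-s)))
    (hs : 1 < s) {a : ℝ} (ha : a ≠ 0) (b : ℝ) : Summable fun n : ℤ => f (a * n + b) := by
  have haff : Tendsto (fun x : ℝ => a * x + b) (cocompact ℝ) (cocompact ℝ) :=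
    ((Homeomorph.mulLeft₀ a ha).trans (Homeomorph.addRight b)).map_cocompact.le
  refine summable_of_isBigO ?_ (hf.comp_tendsto (haff.comp Int.tendsto_coe_cofinite))
  refine (((summable_one_div_int_add_rpow (b / a) s).2 hs).mul_left (|a| ^ (-s))).congr fun n => ?_
  rw [Function.comp_apply, show a * n + b = a * (n + b / a) by field_simp, abs_mul,
    mul_rpow (abs_nonneg a) (abs_nonneg _), rpow_neg (abs_nonneg ((n : ℝ) + b / a)), one_div]

end Decay

lemma Summable.tsum_int_eq_sum_tsum_mul_add {E : Type*} [NormedAddCommGroup E] [CompleteSpace E]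
    {w : ℤ → E} (hw : Summable w) (N : ℕ) [NeZero N] :
    ∑' n, w n = ∑ r : Fin N, ∑' k : ℤ, w (k * N + r) := by
  have hres (r : Fin N) : Summable fun k : ℤ => w (k * N + r) :=
    hw.comp_injective fun k l h => by simpa [NeZero.ne N] using h
  have hprod : Summable fun p => w ((Int.divModEquiv N).symm p) :=
    hw.comp_injective (Int.divModEquiv N).symm.injective
  rw [← (Int.divModEquiv N).symm.tsum_eq, hprod.tsum_prod,
    ← Summable.tsum_finsetSum fun r _ => hres r]
  simp [tsum_fintype]

lemma one_add_exp_pi_div_three_mul_I : 1 + cexp (π / 3 * I) = √3 * cexp (π / 6 * I) := by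
  have h3 : (√3 : ℂ) * √3 = 3 := by exact_mod_cast Real.mul_self_sqrt (by norm_num : (0 : ℝ) ≤ 3)
  rw [show (π / 3 : ℂ) = ((π / 3 : ℝ) : ℂ) by push_cast; rfl,
    show (π / 6 : ℂ) = ((π / 6 : ℝ) : ℂ) by push_cast; rfl, exp_mul_I, exp_mul_I,
    ← ofReal_cos, ← ofReal_sin, ← ofReal_cos, ← ofReal_sin, cos_pi_div_three, sin_pi_div_three,
    cos_pi_div_six, sin_pi_div_six]
  push_cast
  linear_combination (-(1 : ℂ) / 2) * h3

noncomputable def signedLatticeSum (f : ℝ → ℂ) (a r : ℝ) : ℂ :=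
  ∑' k : ℤ, (-1 : ℂ) ^ k * f (a * (k + r))

namespace signedLatticeSum

variable {f : ℝ → ℂ} {a s : ℝ} {c : ℂ}

lemma add_one (r : ℝ) : signedLatticeSum f a (r + 1) = -signedLatticeSum f a r := by
  rw [signedLatticeSum, signedLatticeSum, ← tsum_neg,
    ← (Equiv.addRight (1 : ℤ)).tsum_eq (fun k => -((-1 : ℂ) ^ k * f (a * (k + r))))]
  congr 1 with k
  rw [Equiv.coe_addRight, zpow_add_one₀ (by norm_num)]
  push_cast
  ring_nf

lemma neg (heven : ∀ x, f (-x) = f x) (r : ℝ) :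
    signedLatticeSum f a (-r) = signedLatticeSum f a r := by
  rw [signedLatticeSum, signedLatticeSum, ← (Equiv.neg ℤ).tsum_eq]
  congr 1 with k
  rw [Equiv.neg_apply, zpow_neg, ← inv_zpow, inv_neg, inv_one, ← heven]
  push_cast
  ring_nf

lemma half_eq_zero (heven : ∀ x, f (-x) = f x) : signedLatticeSum f a (1 / 2) = 0 := by
  have h := add_one (f := f) (a := a) (-(1 / 2))
  rw [neg heven, show -(1 / 2 : ℝ) + 1 = 1 / 2 by norm_num] at h
  exact self_eq_neg.1 h

lemma cexp_mul_eq_tsum_fourier (hcont : Continuous f) (hs : 1 < s)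
    (hf : f =O[cocompact ℝ] (|·| ^ (-s))) (hF : 𝓕 f = c • f) (ha : 0 < a) (x : ℝ) :
    cexp (π * I * x) * signedLatticeSum f a x =
      c / a * ∑' n : ℤ, f ((n - 1 / 2) / a) * fourier n (x : UnitAddCircle) := by
  have hFg (ξ : ℝ) : 𝓕 (fun t => f (a * t)) ξ = c / a * f (ξ / a) := by
    rw [Real.fourier_comp_mul_left_apply f ha.ne', hF, abs_of_pos ha]
    simp only [Pi.smul_apply, smul_eq_mul, Complex.real_smul, ofReal_inv]
    ring
  have hsum : Summable fun n : ℤ => 𝓕 (fun t => f (a * t)) (n - 1 / 2) := by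
    simp only [hFg]
    refine ((summable_int_comp_mul_add hf hs (inv_ne_zero ha.ne') (-(1 / 2) / a)).mul_left
      (c / a)).congr fun n => ?_
    congr 2
    field_simp
    ring
  have h := Real.tsum_exp_mul_eq_tsum_fourier_sub (by fun_prop) hs
    (isBigO_comp_mul_left_rpow hf ha.ne') (1 / 2) hsum x
  rw [signedLatticeSum, ← tsum_mul_left, ← tsum_mul_left]
  convert h using 1 <;> congr 1 with n
  · rw [← mul_assoc, ← exp_pi_mul_I, ← Complex.exp_int_mul, ← Complex.exp_add, add_comm (n : ℝ)]
    congr 2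
    push_cast
    ring
  · rw [hFg, mul_assoc]

lemma tsum_fourier_sixth_eq_sum (hs : 1 < s) (hf : f =O[cocompact ℝ] (|·| ^ (-s))) :
    ∑' n : ℤ, f ((n - 1 / 2) / √3) * fourier n ((1 / 6 : ℝ) : UnitAddCircle) =
      ∑ r : Fin 3, cexp (π / 3 * I) ^ (r : ℕ) * signedLatticeSum f √3 ((2 * r - 1) / 6) := by
  have h3 : √3 * √3 = 3 := Real.mul_self_sqrt (by norm_num)
  simp only [fourier_coe_apply, ofReal_one, div_one]
  set w : ℤ → ℂ := fun n => f ((n - 1 / 2) / √3) * cexp (2 * π * I * n * ((1 / 6 : ℝ) : ℂ))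
  have hsum : Summable w := by
    refine Summable.of_norm_bounded ((summable_int_comp_mul_add hf hs
      (inv_ne_zero (Real.sqrt_pos.2 (by norm_num : (0 : ℝ) < 3)).ne') (-(1 / 2) / √3)).norm)
      fun n => le_of_eq ?_
    have hre : (2 * π * I * n * ((1 / 6 : ℝ) : ℂ)).re = 0 := by simp
    rw [norm_mul, Complex.norm_exp, hre, Real.exp_zero, mul_one]
    congr 2
    ring
  rw [hsum.tsum_int_eq_sum_tsum_mul_add 3]
  congr 1 with r
  rw [signedLatticeSum, ← tsum_mul_left]
  congr 1 with k
  have harg : ((k * (3 : ℕ) + r : ℤ) - 1 / 2) / √3 = √3 * (k + (2 * r - 1) / 6) := by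
    field_simp
    push_cast
    linear_combination (-2 * ((k : ℝ) * 6 + 2 * r - 1)) * h3
  have hphase : cexp (2 * π * I * ((k * (3 : ℕ) + r : ℤ) : ℂ) * ((1 / 6 : ℝ) : ℂ)) =
      cexp (π / 3 * I) ^ (r : ℕ) * (-1) ^ k := by
    rw [← exp_pi_mul_I, ← Complex.exp_int_mul, ← Complex.exp_nat_mul, ← Complex.exp_add]
    congr 1
    push_cast
    ring
  simp only [w, harg, hphase]
  ring

lemma sqrt_three_sixth_eq_zero (hcont : Continuous f) (hs : 1 < s)
    (hf : f =O[cocompact ℝ] (|·| ^ (-s))) (heven : ∀ x, f (-x) = f x) (hF : 𝓕 f = c • f)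
    (hc : c ≠ 1) : signedLatticeSum f √3 (1 / 6) = 0 := by
  have h := cexp_mul_eq_tsum_fourier hcont hs hf hF (Real.sqrt_pos.2 (by norm_num : (0 : ℝ) < 3))
    (1 / 6)
  rw [tsum_fourier_sixth_eq_sum hs hf, Fin.sum_univ_three] at h
  norm_num only [Fin.val_zero, Fin.val_one, Fin.val_two, neg heven, half_eq_zero heven, pow_zero,
    pow_one, mul_zero, add_zero] at h
  have hE : cexp (π * I * ((1 / 6 : ℝ) : ℂ)) = cexp (π / 6 * I) := by
    congr 1
    push_cast
    ring
  have hs3 : (√3 : ℂ) ≠ 0 := by exact_mod_cast (Real.sqrt_pos.2 (by norm_num : (0 : ℝ) < 3)).ne'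
  have hcoef : c / √3 * (1 + cexp (π / 3 * I)) = c * cexp (π / 6 * I) := by
    rw [one_add_exp_pi_div_three_mul_I]
    field_simp
  have key : (1 - c) * cexp (π / 6 * I) * signedLatticeSum f √3 (1 / 6) = 0 := by
    rw [hE] at h
    linear_combination h + signedLatticeSum f √3 (1 / 6) * hcoef
  simpa [sub_eq_zero, hc.symm, Complex.exp_ne_zero] using key

end signedLatticeSum

noncomputable def gaussDerivPoly : ℕ → ℝ[X]
  | 0 => 1
  | n + 1 => derivative (gaussDerivPoly n) - C (4 * π) * X * gaussDerivPoly n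

lemma iteratedDeriv_exp_neg_two_pi_mul_sq (n : ℕ) :
    iteratedDeriv n (fun t => rexp (-2 * π * t ^ 2)) =
      fun x => (gaussDerivPoly n).eval x * rexp (-2 * π * x ^ 2) := by
  induction n with
  | zero => simp [gaussDerivPoly]
  | succ n ih =>
    rw [iteratedDeriv_succ, ih]
    ext x
    have hexp : HasDerivAt (fun t => rexp (-2 * π * t ^ 2))
        (-4 * π * x * rexp (-2 * π * x ^ 2)) x := by
      convert ((hasDerivAt_pow 2 x).const_mul (-2 * π)).exp using 1
      ring
    refine (((gaussDerivPoly n).hasDerivAt x).mul hexp).deriv.trans ?_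
    simp only [gaussDerivPoly, eval_sub, eval_mul, eval_C, eval_X]
    ring

lemma hermiteFun_neg (n : ℕ) (x : ℝ) : hermiteFun n (-x) = (-1) ^ n * hermiteFun n x := by
  have h := iteratedDeriv_comp_neg n (fun t => rexp (-2 * π * t ^ 2)) (-x)
  simp only [even_two, Even.neg_pow, smul_eq_mul, neg_neg] at h
  simp only [hermiteFun, h, neg_sq]
  ring

noncomputable def polyGauss (Q : ℝ[X]) (x : ℝ) : ℂ := ((Q.eval x * rexp (-π * x ^ 2) : ℝ) : ℂ)

lemma exists_hermiteFun_eq_smul_polyGauss (n : ℕ) :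
    ∃ c : ℂ, (fun x => (hermiteFun n x : ℂ)) = c • polyGauss (gaussDerivPoly n) := by
  refine ⟨(((2 * π) ^ n * (2 : ℝ) ^ ((n : ℝ) - 1 / 2) * n.factorial) ^ (-(1 / 2 : ℝ)) : ℝ), ?_⟩
  ext x
  rw [hermiteFun, iteratedDeriv_exp_neg_two_pi_mul_sq, Pi.smul_apply, polyGauss, smul_eq_mul,
    ← ofReal_mul]
  congr 1
  rw [mul_assoc, mul_left_comm (rexp _), ← Real.exp_add]
  ring_nf

lemma isLittleO_eval_mul_exp_neg_mul_sq (Q : ℝ[X]) {b : ℝ} (hb : 0 < b) (s : ℝ) :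
    (fun x => Q.eval x * rexp (-b * x ^ 2)) =o[cocompact ℝ] (|·| ^ s) := by
  induction Q using Polynomial.induction_on' with
  | add p q hp hq => simpa only [eval_add, add_mul] using hp.add hq
  | monomial n a =>
    simp only [eval_monomial, mul_assoc]
    refine IsLittleO.const_mul_left ?_ a
    have hlim := (isLittleO_one_iff ℝ).2 (tendsto_rpow_abs_mul_exp_neg_mul_sq_cocompact hb (n - s))
    refine isLittleO_norm_left.1 <| (hlim.mul_isBigO (isBigO_refl (|·| ^ s) _)).congr' ?_
      (by simp)
    filter_upwards [(isCompact_singleton (x := (0 : ℝ))).compl_mem_cocompact] with x hx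
    rw [mul_right_comm, ← rpow_add (abs_pos.2 hx), sub_add_cancel, rpow_natCast, norm_mul,
      norm_pow, Real.norm_eq_abs, Real.norm_of_nonneg (Real.exp_pos _).le]

lemma isLittleO_polyGauss (Q : ℝ[X]) (s : ℝ) : polyGauss Q =o[cocompact ℝ] (|·| ^ s) :=
  isLittleO_ofReal_left.2 (isLittleO_eval_mul_exp_neg_mul_sq Q pi_pos s)

lemma continuous_polyGauss (Q : ℝ[X]) : Continuous (polyGauss Q) := by
  unfold polyGauss
  fun_prop

lemma integrable_polyGauss (Q : ℝ[X]) : Integrable (polyGauss Q) := by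
  have hsplit : (fun x => Q.eval x * rexp (-π * x ^ 2)) =
      fun x => (Q.eval x * rexp (-(π / 2) * x ^ 2)) * rexp (-(π / 2) * x ^ 2) := by
    ext x
    rw [mul_assoc, ← Real.exp_add]
    ring_nf
  have hO : polyGauss Q =O[cocompact ℝ] fun x => rexp (-(π / 2) * x ^ 2) := by
    refine isBigO_ofReal_left.2 ?_
    rw [hsplit]
    simpa only [Real.rpow_zero, one_mul] using
      (isLittleO_eval_mul_exp_neg_mul_sq Q (half_pos pi_pos) 0).isBigO.mul
        (isBigO_refl (fun x => rexp (-(π / 2) * x ^ 2)) _)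
  exact (continuous_polyGauss Q).locallyIntegrable.integrable_of_isBigO_cocompact hO
    ((integrable_exp_neg_mul_sq (half_pos pi_pos)).integrableAtFilter _)

lemma hasDerivAt_polyGauss (Q : ℝ[X]) (x : ℝ) :
    HasDerivAt (polyGauss Q) (polyGauss (derivative Q - C (2 * π) * X * Q) x) x := by
  have hexp : HasDerivAt (fun t => rexp (-π * t ^ 2)) (-2 * π * x * rexp (-π * x ^ 2)) x := by
    convert ((hasDerivAt_pow 2 x).const_mul (-π)).exp using 1
    ring
  refine ((Q.hasDerivAt x).mul hexp).ofReal_comp.congr_deriv ?_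
  simp only [polyGauss, eval_sub, eval_mul, eval_C, eval_X]
  push_cast
  ring

lemma differentiable_polyGauss (Q : ℝ[X]) : Differentiable ℝ (polyGauss Q) :=
  fun x => (hasDerivAt_polyGauss Q x).differentiableAt

lemma deriv_polyGauss (Q : ℝ[X]) :
    deriv (polyGauss Q) = polyGauss (derivative Q - C (2 * π) * X * Q) :=
  funext fun x => (hasDerivAt_polyGauss Q x).deriv

lemma smul_polyGauss (Q : ℝ[X]) : (fun x : ℝ => x • polyGauss Q x) = polyGauss (X * Q) := by
  ext x
  simp only [polyGauss, eval_mul, eval_X, Complex.real_smul]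
  push_cast
  ring

lemma polyGauss_gaussDerivPoly_succ (n : ℕ) :
    polyGauss (gaussDerivPoly (n + 1)) = fun x : ℝ =>
      deriv (polyGauss (gaussDerivPoly n)) x -
        (2 * π * x : ℂ) • polyGauss (gaussDerivPoly n) x := by
  ext x
  simp only [deriv_polyGauss, polyGauss, gaussDerivPoly, eval_sub, eval_mul, eval_C, eval_X,
    smul_eq_mul]
  push_cast
  ring

lemma fourier_polyGauss_gaussDerivPoly (n : ℕ) :
    𝓕 (polyGauss (gaussDerivPoly n)) = (-I) ^ n • polyGauss (gaussDerivPoly n) := by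
  induction n with
  | zero =>
    have hgauss : polyGauss (gaussDerivPoly 0) = fun x : ℝ => cexp (-π * 1 * x ^ 2) := by
      ext x
      simp [polyGauss, gaussDerivPoly]
    rw [hgauss, fourier_gaussian_pi (by norm_num)]
    ext x
    simp
  | succ n ih =>
    rw [polyGauss_gaussDerivPoly_succ, Real.fourier_deriv_sub_mul_smul (integrable_polyGauss _)
      (differentiable_polyGauss _) (by rw [deriv_polyGauss]; exact integrable_polyGauss _)
      (by rw [smul_polyGauss]; exact integrable_polyGauss _), ih]
    ext ξ
    rw [deriv_const_smul _ (differentiable_polyGauss _ ξ)]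
    simp only [Pi.smul_apply, smul_eq_mul]
    ring

lemma fourier_hermiteFun (n : ℕ) :
    𝓕 (fun x => (hermiteFun n x : ℂ)) = (-I) ^ n • fun x => (hermiteFun n x : ℂ) := by
  obtain ⟨c, hc⟩ := exists_hermiteFun_eq_smul_polyGauss n
  rw [hc, Real.fourier_const_smul, fourier_polyGauss_gaussDerivPoly, smul_comm]

lemma continuous_hermiteFun (n : ℕ) : Continuous fun x => (hermiteFun n x : ℂ) := by
  obtain ⟨c, hc⟩ := exists_hermiteFun_eq_smul_polyGauss n
  exact hc ▸ (continuous_polyGauss _).const_smul c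

lemma isLittleO_hermiteFun (n : ℕ) (s : ℝ) :
    (fun x => (hermiteFun n x : ℂ)) =o[cocompact ℝ] (|·| ^ s) := by
  obtain ⟨c, hc⟩ := exists_hermiteFun_eq_smul_polyGauss n
  exact hc ▸ (isLittleO_polyGauss _ s).const_smul_left c

theorem hermite_4m2_sum_sqrt3 (m : ℕ) :
    ∀ p ∈ ({1, 5} : Set ℕ),
      ∑' k : ℤ, (-1 : ℝ) ^ k * hermiteFun (4 * m + 2) (Real.sqrt 3 * ((k : ℝ) + (p : ℝ) / 6)) = 0 := by
  set h : ℝ → ℂ := fun x => (hermiteFun (4 * m + 2) x : ℂ)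
  have heven (x : ℝ) : h (-x) = h x := by
    simp only [h, hermiteFun_neg, Even.neg_one_pow (⟨2 * m + 1, by ring⟩ : Even (4 * m + 2)),
      one_mul]
  have hsixth : signedLatticeSum h √3 (1 / 6) = 0 := by
    refine signedLatticeSum.sqrt_three_sixth_eq_zero (continuous_hermiteFun _) one_lt_two
      (isLittleO_hermiteFun _ _).isBigO heven (c := -1) ?_ (by norm_num)
    rw [fourier_hermiteFun, pow_add, pow_mul]
    norm_num [h]
  have hfive : signedLatticeSum h √3 (5 / 6) = 0 := by
    rw [show (5 / 6 : ℝ) = -(1 / 6) + 1 by norm_num, signedLatticeSum.add_one,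
      signedLatticeSum.neg heven, hsixth, neg_zero]
  intro p hp
  apply Complex.ofReal_injective
  rw [Complex.ofReal_tsum, ofReal_zero]
  rcases hp with rfl | rfl
  · simpa [signedLatticeSum, h] using hsixth
  · simpa [signedLatticeSum, h] using hfive
end
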